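/- Let μ₋ ≤ 0, T > 0, K > 0, s ∈ [0,T), and ε > 0. Define I = Φ((-μ₋(T-s) + εTe^{KT})/√(T-s)) - e^{2μ₋ εTe^{KT}} Φ((-μ₋(T-s) - εTe^{KT})/√(T-s)). Then I ≤ (2Te^{KT}/√(2π(T-s)) + 2|μ₋| T e^{KT}) ε. -/

import Mathlib

/-! Since the Gaussian density is bounded by `1/√(2π)`, `Φ` is `1/√(2π)`-Lipschitz, which bounds
`Φ(a) - Φ(b)` by `(a - b)/√(2π)`. Replacing `Φ(b)` by `e^{2μ₋E} Φ(b)` costs at most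
`1 - e^{2μ₋E} ≤ -2μ₋E`, because `Φ ≤ 1` (here `E = εTe^{KT}`). -/

open MeasureTheory ProbabilityTheory

/-- Standard normal cumulative distribution function. -/
noncomputable def Phi (y : ℝ) : ℝ :=
  ∫ z in Set.Iic y, Real.exp (-z ^ 2 / 2) / Real.sqrt (2 * Real.pi)

lemma Phi_eq_setIntegral_gaussianPDFReal (y : ℝ) :
    Phi y = ∫ z in Set.Iic y, gaussianPDFReal 0 1 z := by
  simp only [Phi, gaussianPDFReal, NNReal.coe_one, mul_one, sub_zero]
  congr 1 with z
  rw [div_eq_inv_mul]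

lemma gaussianPDFReal_zero_one_le (z : ℝ) :
    gaussianPDFReal 0 1 z ≤ 1 / Real.sqrt (2 * Real.pi) := by
  simp only [gaussianPDFReal, NNReal.coe_one, mul_one, sub_zero, one_div]
  refine mul_le_of_le_one_right (by positivity) (Real.exp_le_one_iff.2 ?_)
  have := sq_nonneg z
  linarith

lemma Phi_le_one (y : ℝ) : Phi y ≤ 1 := by
  rw [Phi_eq_setIntegral_gaussianPDFReal, ← integral_gaussianPDFReal_eq_one 0 one_ne_zero]
  exact setIntegral_le_integral (integrable_gaussianPDFReal 0 1)
    (Filter.Eventually.of_forall (gaussianPDFReal_nonneg 0 1))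

lemma Phi_sub_Phi_le {a b : ℝ} (hba : b ≤ a) :
    Phi a - Phi b ≤ (a - b) / Real.sqrt (2 * Real.pi) := by
  have hint := integrable_gaussianPDFReal 0 1
  rw [Phi_eq_setIntegral_gaussianPDFReal, Phi_eq_setIntegral_gaussianPDFReal,
    intervalIntegral.integral_Iic_sub_Iic hint.integrableOn hint.integrableOn]
  calc ∫ z in b..a, gaussianPDFReal 0 1 z
      ≤ ∫ _ in b..a, 1 / Real.sqrt (2 * Real.pi) :=
        intervalIntegral.integral_mono_on hba hint.intervalIntegrable intervalIntegrable_const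
          fun z _ => gaussianPDFReal_zero_one_le z
    _ = (a - b) / Real.sqrt (2 * Real.pi) := by
        rw [intervalIntegral.integral_const, smul_eq_mul, mul_one_div]

lemma sub_exp_mul_le {p q c : ℝ} (hp : p ≤ 1) (hc : c ≤ 0) :
    q - Real.exp c * p ≤ (q - p) - c := by
  have h_one_sub_exp : 0 ≤ 1 - Real.exp c := sub_nonneg.2 (Real.exp_le_one_iff.2 hc)
  have := mul_le_mul_of_nonneg_left hp h_one_sub_exp
  linarith [Real.add_one_le_exp c]

theorem stmt13_general (μm T K s ε : ℝ) (hμm : μm ≤ 0) (hT : 0 < T)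
    (hs : s ∈ Set.Ico 0 T) (hε : 0 < ε) :
    Phi ((-μm * (T - s) + ε * T * Real.exp (K * T)) / Real.sqrt (T - s))
      - Real.exp (2 * μm * (ε * T * Real.exp (K * T))) *
        Phi ((-μm * (T - s) - ε * T * Real.exp (K * T)) / Real.sqrt (T - s))
    ≤ (2 * T * Real.exp (K * T) / Real.sqrt (2 * Real.pi * (T - s))
        + 2 * |μm| * T * Real.exp (K * T)) * ε := by
  set E := ε * T * Real.exp (K * T) with hE
  have hE_pos : 0 < E := by positivity
  have hsqrt_pos : 0 < Real.sqrt (T - s) := Real.sqrt_pos.2 (sub_pos.2 hs.2)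
  have hlip := Phi_sub_Phi_le (a := (-μm * (T - s) + E) / Real.sqrt (T - s))
    (b := (-μm * (T - s) - E) / Real.sqrt (T - s)) (by gcongr; linarith)
  have hexp := sub_exp_mul_le (q := Phi ((-μm * (T - s) + E) / Real.sqrt (T - s)))
    (Phi_le_one ((-μm * (T - s) - E) / Real.sqrt (T - s)))
    (mul_nonpos_of_nonpos_of_nonneg (by linarith) hE_pos.le : 2 * μm * E ≤ 0)
  have hwidth : ((-μm * (T - s) + E) / Real.sqrt (T - s) - (-μm * (T - s) - E) / Real.sqrt (T - s))
      / Real.sqrt (2 * Real.pi) = 2 * T * Real.exp (K * T) / Real.sqrt (2 * Real.pi * (T - s)) * ε := by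
    rw [Real.sqrt_mul (by positivity) (T - s), hE]
    field_simp
    ring
  rw [abs_of_nonpos hμm]
  linarith

theorem stmt13 (μm T K s ε : ℝ) (hμm : μm ≤ 0) (hT : 0 < T) (hK : 0 < K)
    (hs : s ∈ Set.Ico 0 T) (hε : 0 < ε) :
    Phi ((-μm * (T - s) + ε * T * Real.exp (K * T)) / Real.sqrt (T - s))
      - Real.exp (2 * μm * (ε * T * Real.exp (K * T))) *
        Phi ((-μm * (T - s) - ε * T * Real.exp (K * T)) / Real.sqrt (T - s))
    ≤ (2 * T * Real.exp (K * T) / Real.sqrt (2 * Real.pi * (T - s))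
        + 2 * |μm| * T * Real.exp (K * T)) * ε :=
  stmt13_general μm T K s ε hμm hT hs hε
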